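/- For every natural number n ≥ 0: if y_n ∈ [−1/φ², 1/φ³) then x_{n+1} = x_n + 1 + φ and y_{n+1} = y_n + 1 + ψ, while if y_n ∈ [1/φ³, 1/φ) then x_{n+1} = x_n + φ and y_{n+1} = y_n + ψ. (This describes the successor map s on the set {(x_n, y_n) : n ∈ ℕ}.) -/

import Mathlib

open Real Finset

noncomputable section

/-- The golden mean φ = (1+√5)/2. -/
def phi : ℝ := (1 + Real.sqrt 5) / 2

/-- ψ = (1−√5)/2 = −1/φ. -/
def psi : ℝ := (1 - Real.sqrt 5) / 2

/-- A word `a : Fin k → ℕ` is binary if all its letters are 0 or 1. -/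
def IsBin {k : ℕ} (a : Fin k → ℕ) : Prop := ∀ i, a i ≤ 1

/-- N(a) = ∑_{i=1}^k a_i F_{k+2−i}  (here `i : Fin k` corresponds to `i+1`). -/
def Nw {k : ℕ} (a : Fin k → ℕ) : ℕ := ∑ i : Fin k, a i * Nat.fib (k + 1 - (i : ℕ))

/-- X(a) = ∑_{i=1}^k a_i φ^{k+2−i}. -/
def Xw {k : ℕ} (a : Fin k → ℕ) : ℝ := ∑ i : Fin k, (a i : ℝ) * phi ^ (k + 1 - (i : ℕ))

/-- Y(a) = ∑_{i=1}^k a_i ψ^{k+2−i}. -/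
def Yw {k : ℕ} (a : Fin k → ℕ) : ℝ := ∑ i : Fin k, (a i : ℝ) * psi ^ (k + 1 - (i : ℕ))

/-- R(n): the number of partitions of n into distinct Fibonacci numbers, i.e. the number
of finite sets S of integers, each ≥ 2, with n = ∑_{i∈S} F_i.  (So R(0) = 1.) -/
def R (n : ℕ) : ℕ :=
  Nat.card {S : Finset ℕ // (∀ i ∈ S, 2 ≤ i) ∧ ∑ i ∈ S, Nat.fib i = n}

/-- `IsZeck n b` : `b = b_1⋯b_k` is the Zeckendorf word of `n ≥ 1`, i.e. a binary word
with `b_1 = 1`, no two consecutive 1's, and N(b) = n. -/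
def IsZeck (n : ℕ) {k : ℕ} (b : Fin k → ℕ) : Prop :=
  IsBin b ∧ (∀ h : 0 < k, b ⟨0, h⟩ = 1) ∧
    (∀ i j : Fin k, (j : ℕ) = (i : ℕ) + 1 → b i * b j = 0) ∧ Nw b = n

/-- `IsXY n x y` : `(x, y) = (x_n, y_n)`, i.e. `x = X(b)` and `y = Y(b)` for the
Zeckendorf word `b` of `n` when `n ≥ 1`, and `(x, y) = (0, 0)` when `n = 0`. -/
def IsXY (n : ℕ) (x y : ℝ) : Prop :=
  (n = 0 ∧ x = 0 ∧ y = 0) ∨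
    ∃ (k : ℕ) (b : Fin k → ℕ), IsZeck n b ∧ x = Xw b ∧ y = Yw b

/-- The rotation T by 1/φ² on [−1/φ², 1/φ), extended to ℝ by the same formula. -/
def T (y : ℝ) : ℝ := if y < 1 / phi ^ 3 then y + 1 / phi ^ 2 else y + 1 / phi ^ 2 - 1

/-! Both coordinates are conjugate: expanding `φ^j` and `ψ^j` as `F_j r + F_{j-1}` gives
`x_n = n φ + m` and `y_n = n ψ + m` for a natural number `m`, and the Horner recursion
`Y(a c) = ψ Y(a) + c ψ²` keeps `y_n` in the unit interval `[-1/φ², 1/φ) = [-ψ², -ψ)`.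
Hence `x_{n+1} - x_n - φ = y_{n+1} - y_n - ψ` is an integer `d`, and `d` is the unique integer
that brings `y_n + ψ` back into that interval: `d = 1` below `1/φ³` and `d = 0` above. -/

open goldenRatio

lemma phi_eq_goldenRatio : phi = φ := rfl

lemma psi_eq_goldenConj : psi = ψ := rfl

lemma one_div_goldenRatio : 1 / φ = -ψ := by
  rw [one_div, inv_goldenRatio]

lemma one_div_goldenRatio_sq : 1 / φ ^ 2 = ψ + 1 := by
  rw [one_div, ← inv_pow, ← one_div, one_div_goldenRatio, neg_sq, goldenConj_sq]

lemma one_div_goldenRatio_pow_three : 1 / φ ^ 3 = -(2 * ψ + 1) := by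
  rw [one_div, ← inv_pow, ← one_div, one_div_goldenRatio]
  linear_combination (-ψ - 1) * goldenConj_sq

/-- `M(a) = ∑ a_i F_{k+1-i}`, the companion of `N(a)` in `X(a) = N(a) φ + M(a)`. -/
def Mw {k : ℕ} (a : Fin k → ℕ) : ℕ := ∑ i : Fin k, a i * Nat.fib (k - (i : ℕ))

lemma sum_mul_pow_eq_Nw_mul_add_Mw {k : ℕ} (a : Fin k → ℕ) {r : ℝ}
    (hr : ∀ j : ℕ, r * Nat.fib (j + 1) + Nat.fib j = r ^ (j + 1)) :
    ∑ i : Fin k, (a i : ℝ) * r ^ (k + 1 - (i : ℕ)) = Nw a * r + Mw a := by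
  simp only [Nw, Mw, Nat.cast_sum, Nat.cast_mul, Finset.sum_mul, ← Finset.sum_add_distrib]
  refine Finset.sum_congr rfl fun i _ => ?_
  have hk : k + 1 - (i : ℕ) = k - (i : ℕ) + 1 := by omega
  rw [hk, ← hr]
  ring

lemma Xw_eq {k : ℕ} (a : Fin k → ℕ) : Xw a = Nw a * φ + Mw a :=
  sum_mul_pow_eq_Nw_mul_add_Mw a goldenRatio_mul_fib_succ_add_fib

lemma Yw_eq {k : ℕ} (a : Fin k → ℕ) : Yw a = Nw a * ψ + Mw a :=
  sum_mul_pow_eq_Nw_mul_add_Mw a goldenConj_mul_fib_succ_add_fib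

lemma Yw_succ {k : ℕ} (a : Fin (k + 1) → ℕ) :
    Yw a = ψ * Yw (fun i : Fin k => a i.castSucc) + a (Fin.last k) * ψ ^ 2 := by
  simp only [Yw, Fin.sum_univ_castSucc, Finset.mul_sum, Fin.val_last, Fin.val_castSucc]
  congr 1
  · refine Finset.sum_congr rfl fun i _ => ?_
    rw [show k + 1 + 1 - (i : ℕ) = k + 1 - (i : ℕ) + 1 by omega, pow_succ, psi_eq_goldenConj]
    ring
  · rw [show k + 1 + 1 - k = 2 by omega, psi_eq_goldenConj]

lemma zero_mem_Ioo_goldenConj : (0 : ℝ) ∈ Set.Ioo (-ψ ^ 2) (-ψ) :=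
  ⟨by nlinarith [goldenConj_neg], by linarith [goldenConj_neg]⟩

lemma Yw_mem_Ioo : ∀ {k : ℕ} (a : Fin k → ℕ), IsBin a → Yw a ∈ Set.Ioo (-ψ ^ 2) (-ψ)
  | 0, a, _ => by simpa [Yw] using zero_mem_Ioo_goldenConj
  | k + 1, a, ha => by
    obtain ⟨hlo, hhi⟩ := Yw_mem_Ioo (fun i : Fin k => a i.castSucc) fun i => ha i.castSucc
    have hψ := goldenConj_neg
    have hψ1 := neg_one_lt_goldenConj
    rw [Yw_succ, Set.mem_Ioo]
    rcases Nat.le_one_iff_eq_zero_or_eq_one.mp (ha (Fin.last k)) with hc | hc <;>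
      rw [hc] <;> constructor <;> push_cast <;>
      nlinarith [goldenConj_sq, mul_lt_mul_of_neg_left hlo hψ, mul_lt_mul_of_neg_left hhi hψ]

lemma IsXY.exists_nat {n : ℕ} {x y : ℝ} (h : IsXY n x y) :
    ∃ m : ℕ, x = n * φ + m ∧ y = n * ψ + m := by
  rcases h with ⟨rfl, rfl, rfl⟩ | ⟨k, a, ⟨-, -, -, rfl⟩, rfl, rfl⟩
  · exact ⟨0, by simp, by simp⟩
  · exact ⟨Mw a, Xw_eq a, Yw_eq a⟩

lemma IsXY.mem_Ico {n : ℕ} {x y : ℝ} (h : IsXY n x y) : y ∈ Set.Ico (-ψ ^ 2) (-ψ) := by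
  rcases h with ⟨-, -, rfl⟩ | ⟨k, a, ⟨ha, -⟩, -, rfl⟩
  · exact Set.Ioo_subset_Ico_self zero_mem_Ioo_goldenConj
  · exact Set.Ioo_subset_Ico_self (Yw_mem_Ioo a ha)

lemma IsXY.exists_int_step {n : ℕ} {x y x' y' : ℝ} (h : IsXY n x y) (h' : IsXY (n + 1) x' y') :
    ∃ d : ℤ, x' = x + φ + d ∧ y' = y + ψ + d := by
  obtain ⟨m, rfl, rfl⟩ := h.exists_nat
  obtain ⟨m', rfl, rfl⟩ := h'.exists_nat
  exact ⟨m' - m, by push_cast; ring, by push_cast; ring⟩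

lemma Int.eq_of_add_mem_Ico {a b t : ℝ} (hab : b ≤ a + 1) {d e : ℤ}
    (hd : t + d ∈ Set.Ico a b) (he : t + e ∈ Set.Ico a b) : d = e := by
  have h₁ : (d : ℝ) < e + 1 := by linarith [hd.2, he.1]
  have h₂ : (e : ℝ) < d + 1 := by linarith [hd.1, he.2]
  have : d < e + 1 := by exact_mod_cast h₁
  have : e < d + 1 := by exact_mod_cast h₂
  omega

/-- the successor map.  If y_n ∈ [−1/φ², 1/φ³) then
(x_{n+1}, y_{n+1}) = (x_n + 1 + φ, y_n + 1 + ψ); if y_n ∈ [1/φ³, 1/φ) then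
(x_{n+1}, y_{n+1}) = (x_n + φ, y_n + ψ). -/
theorem stmt_6 (n : ℕ) (xn yn xs ys : ℝ)
    (h1 : IsXY n xn yn) (h2 : IsXY (n + 1) xs ys) :
    (yn ∈ Set.Ico (-(1 / phi ^ 2)) (1 / phi ^ 3) →
      xs = xn + 1 + phi ∧ ys = yn + 1 + psi) ∧
    (yn ∈ Set.Ico (1 / phi ^ 3) (1 / phi) →
      xs = xn + phi ∧ ys = yn + psi) := by
  obtain ⟨d, rfl, rfl⟩ := h1.exists_int_step h2
  have hd := h2.mem_Ico
  have hψ_sq := goldenConj_sq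
  have hψ_neg := goldenConj_neg
  have hlen : -ψ ≤ -ψ ^ 2 + 1 := by linarith
  simp only [Set.mem_Ico, phi_eq_goldenRatio, psi_eq_goldenConj, one_div_goldenRatio,
    one_div_goldenRatio_sq, one_div_goldenRatio_pow_three]
  refine ⟨fun ⟨hlo, hhi⟩ => ?_, fun ⟨hlo, hhi⟩ => ?_⟩
  · obtain rfl : d = 1 := Int.eq_of_add_mem_Ico hlen hd
      (t := yn + ψ) ⟨by push_cast; linarith [neg_one_lt_goldenConj], by push_cast; linarith⟩
    push_cast
    constructor <;> ring
  · obtain rfl : d = 0 := Int.eq_of_add_mem_Ico hlen hd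
      (t := yn + ψ) ⟨by push_cast; linarith, by push_cast; linarith⟩
    simp

end
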